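/- arXiv:1306.1510 — 3 statements merged into one kernel-verified Lean document; each statement's English description precedes it below -/
import Mathlib

section
/- If a Radon kernel π from point configurations to measures on X satisfies π(μ+δ_y, ·) = f(x,y)·π(μ, ·) on {y}^c for a measurable nonnegative function f (condition A2'), then the cocycle condition π(μ+δ_y, dx)π(μ, dy) = π(μ+δ_x, dy)π(μ, dx) holds for all μ if and only if f is symmetric (f(x,y)=f(y,x)) almost surely with respect to π(μ,·)⊗π(μ,·) off the diagonal. -/
open MeasureTheory ENNReal Bornology

variable {X : Type*} [MetricSpace X] [MeasurableSpace X] [BorelSpace X]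

/-- A locally finite point measure: integer-valued (possibly infinite) on Borel sets,
finite on bounded Borel sets. -/
def IsPointMeasure (μ : Measure X) : Prop :=
  (∀ B : Set X, MeasurableSet B → μ B = ∞ ∨ ∃ n : ℕ, μ B = n) ∧
  (∀ B : Set X, MeasurableSet B → IsBounded B → μ B ≠ ∞)

/-- A Radon kernel from point configurations to measures: measurable in the configuration,
and each value is a Radon (locally finite) measure. -/
def IsRadonKernel (π : Measure X → Measure X) : Prop :=
  Measurable π ∧ ∀ μ : Measure X, ∀ B : Set X, MeasurableSet B → IsBounded B → π μ B ≠ ∞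

/-- The cocycle condition (A1): π(μ+δ_y, dx)π(μ, dy) = π(μ+δ_x, dy)π(μ, dx). -/
def Cocycle (π : Measure X → Measure X) : Prop :=
  ∀ μ : Measure X, IsPointMeasure μ →
    ∀ g : X → X → ℝ≥0∞, Measurable (Function.uncurry g) →
      ∫⁻ y, (∫⁻ x, g x y ∂ π (μ + Measure.dirac y)) ∂ π μ
        = ∫⁻ x, (∫⁻ y, g x y ∂ π (μ + Measure.dirac x)) ∂ π μ

/-- Condition (A2'): π(μ+δ_y, dx) = f(x,y) π(μ, dx) on {y}ᶜ. -/
def CondA2' (π : Measure X → Measure X) (f : X → X → ℝ≥0∞) : Prop :=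
  ∀ (y : X) (μ : Measure X), IsPointMeasure μ →
    (π (μ + Measure.dirac y)).restrict {y}ᶜ
      = ((π μ).withDensity (fun x => f x y)).restrict {y}ᶜ

/-! Write `ν = π μ`. By (A2'),
  `∫ g(x, y) π(μ + δ_y, dx) = ∫_{x ≠ y} f(x, y) g(x, y) ν(dx) + g(y, y) π(μ + δ_y, {y})`,
so each side of the cocycle identity is an integral over `ν ⊗ ν` off the diagonal plus the same
diagonal term, the off-diagonal integrands being `f(x, y) g(x, y)` and `f(y, x) g(x, y)`. These
agree for every `g` when `f` is symmetric. Conversely, testing with indicators of sets avoiding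
the diagonal shows that `f(x, y)` and `f(y, x)` have the same integral over every set on which
they differ, so they agree `ν ⊗ ν`-a.e. -/

section General

variable {α : Type*} [MeasurableSpace α]

theorem ae_eq_of_forall_setLIntegral_eq_of_subset_ne {m : Measure α} [SigmaFinite m]
    {F G : α → ℝ≥0∞} (hF : Measurable F) (hG : Measurable G)
    (h : ∀ s, MeasurableSet s → s ⊆ {a | F a ≠ G a} → ∫⁻ a in s, F a ∂m = ∫⁻ a in s, G a ∂m) :
    F =ᵐ[m] G := by
  set A := {a | F a ≠ G a}
  have hA : MeasurableSet A := (measurableSet_eq_fun hF hG).compl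
  have hAFG : A.indicator F =ᵐ[m] A.indicator G :=
    ae_eq_of_forall_setLIntegral_eq_of_sigmaFinite (hF.indicator hA) (hG.indicator hA)
      fun s hs _ => by
        rw [setLIntegral_indicator hA, setLIntegral_indicator hA]
        exact h _ (hA.inter hs) Set.inter_subset_left
  filter_upwards [hAFG] with a ha
  by_contra hne
  rw [Set.indicator_of_mem hne, Set.indicator_of_mem hne] at ha
  exact hne ha

/- A countable, hence measurable, stand-in for the diagonal, which need not be measurable in
`α × α` (e.g. for a non-separable metric space `X`). -/
def diagonalAtoms (ν : Measure α) : Set (α × α) :=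
  (fun a => (a, a)) '' {a | 0 < ν {a}}

theorem swap_mem_diagonalAtoms {ν : Measure α} {p : α × α} :
    p.swap ∈ diagonalAtoms ν ↔ p ∈ diagonalAtoms ν := by
  simp only [diagonalAtoms, Set.mem_image, Prod.ext_iff, Prod.fst_swap, Prod.snd_swap]
  grind

variable [MeasurableSingletonClass α]

theorem measurableSet_diagonalAtoms (ν : Measure α) [SFinite ν] :
    MeasurableSet (diagonalAtoms ν) :=
  ((Measure.countable_meas_pos_of_disjoint_iUnion (As := fun a : α => {a})
    (fun _ => measurableSet_singleton _)
    fun _ _ hab => Set.disjoint_singleton.mpr hab).image _).measurableSet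

theorem setLIntegral_compl_singleton_eq_lintegral_indicator (ν : Measure α)
    (F : α × α → ℝ≥0∞) (y : α) :
    ∫⁻ x in {y}ᶜ, F (x, y) ∂ν = ∫⁻ x, (diagonalAtoms ν)ᶜ.indicator F (x, y) ∂ν := by
  set S := (fun x => (x, y)) ⁻¹' diagonalAtoms ν
  have hS : S = ∅ ∨ S = {y} := Set.subset_singleton_iff_eq.1 <| by
    rintro x ⟨a, -, hax⟩
    exact (Prod.ext_iff.1 hax).1.symm.trans (Prod.ext_iff.1 hax).2
  -- `S` can only miss `y` when `y` is not an atom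
  have hSy : S =ᵐ[ν] ({y} : Set α) := by
    rcases hS with hS | hS
    · rw [hS]
      refine (ae_eq_empty.2 ?_).symm
      by_contra hy
      exact (Set.eq_empty_iff_forall_notMem.1 hS) y ⟨y, pos_iff_ne_zero.2 hy, rfl⟩
    · rw [hS]
      rfl
  have hSmeas : MeasurableSet S := by
    rcases hS with hS | hS <;> rw [hS]
    exacts [MeasurableSet.empty, measurableSet_singleton y]
  simp_rw [← Set.indicator_comp_right (fun x => (x, y)) (g := F)]
  exact (setLIntegral_congr hSy.compl.symm).trans (lintegral_indicator hSmeas.compl _).symm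

end General

theorem sigmaFinite_of_isBounded_ne_top {Y : Type*} [PseudoMetricSpace Y] [MeasurableSpace Y]
    [OpensMeasurableSpace Y] (m : Measure Y)
    (h : ∀ B : Set Y, MeasurableSet B → IsBounded B → m B ≠ ∞) : SigmaFinite m := by
  rcases isEmpty_or_nonempty Y with hY | ⟨⟨y₀⟩⟩
  · infer_instance
  · exact ⟨⟨{ set := fun n => Metric.ball y₀ n
              set_mem := fun _ => trivial
              finite := fun _ => (h _ measurableSet_ball Metric.isBounded_ball).lt_top
              spanning := Metric.iUnion_ball_nat y₀ }⟩⟩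

section Kernel

variable {π : Measure X → Measure X} {f : X → X → ℝ≥0∞}

theorem lintegral_add_dirac_eq (hf : Measurable (Function.uncurry f)) (hA2' : CondA2' π f)
    {μ : Measure X} (hμ : IsPointMeasure μ) (y : X) {h : X → ℝ≥0∞} (hh : Measurable h) :
    ∫⁻ x, h x ∂π (μ + Measure.dirac y)
      = ∫⁻ x in {y}ᶜ, f x y * h x ∂π μ + h y * π (μ + Measure.dirac y) {y} := by
  rw [← lintegral_add_compl h (measurableSet_singleton y), add_comm, lintegral_singleton,
    hA2' y μ hμ, restrict_withDensity (measurableSet_singleton y).compl,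
    lintegral_withDensity_eq_lintegral_mul _ hf.of_uncurry_right hh]
  rfl

theorem lintegral_lintegral_add_dirac_eq (hf : Measurable (Function.uncurry f))
    (hA2' : CondA2' π f) {μ : Measure X} (hμ : IsPointMeasure μ) [SigmaFinite (π μ)]
    {g : X → X → ℝ≥0∞} (hg : Measurable (Function.uncurry g)) :
    ∫⁻ y, ∫⁻ x, g x y ∂π (μ + Measure.dirac y) ∂π μ
      = ∫⁻ p, (diagonalAtoms (π μ))ᶜ.indicator (fun p => f p.1 p.2 * g p.1 p.2) p
            ∂(π μ).prod (π μ)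
        + ∫⁻ y, g y y * π (μ + Measure.dirac y) {y} ∂π μ := by
  have hF : Measurable
      ((diagonalAtoms (π μ))ᶜ.indicator fun p : X × X => f p.1 p.2 * g p.1 p.2) :=
    (hf.mul hg).indicator (measurableSet_diagonalAtoms _).compl
  simp_rw [lintegral_add_dirac_eq hf hA2' hμ _ hg.of_uncurry_right,
    setLIntegral_compl_singleton_eq_lintegral_indicator (π μ)
      (fun p : X × X => f p.1 p.2 * g p.1 p.2)]
  rw [lintegral_add_left hF.lintegral_prod_left', lintegral_prod_symm' _ hF]

theorem lintegral_lintegral_add_dirac_eq_of_diag_eq_zero (hf : Measurable (Function.uncurry f))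
    (hA2' : CondA2' π f) {μ : Measure X} (hμ : IsPointMeasure μ) [SigmaFinite (π μ)]
    {g : X → X → ℝ≥0∞} (hg : Measurable (Function.uncurry g)) (hg0 : ∀ x, g x x = 0) :
    ∫⁻ y, ∫⁻ x, g x y ∂π (μ + Measure.dirac y) ∂π μ
      = ∫⁻ p, f p.1 p.2 * g p.1 p.2 ∂(π μ).prod (π μ) := by
  rw [lintegral_lintegral_add_dirac_eq hf hA2' hμ hg]
  simp only [hg0, zero_mul, lintegral_zero, add_zero]
  congr 1
  refine Set.indicator_eq_self.2 fun p hp ⟨a, _, hpa⟩ => hp ?_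
  simp [← hpa, hg0]

theorem ae_density_symm_of_cocycle (hf : Measurable (Function.uncurry f)) (hA2' : CondA2' π f)
    (hσ : ∀ μ, SigmaFinite (π μ)) (hC : Cocycle π) {μ : Measure X} (hμ : IsPointMeasure μ) :
    ∀ᵐ p ∂(π μ).prod (π μ), f p.1 p.2 = f p.2 p.1 := by
  have := hσ μ
  refine ae_eq_of_forall_setLIntegral_eq_of_subset_ne (F := fun p : X × X => f p.1 p.2) hf
    (hf.comp measurable_swap) fun s hs hsne => ?_
  set g : X → X → ℝ≥0∞ := fun x y => s.indicator 1 (x, y)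
  have hg : Measurable (Function.uncurry g) := measurable_one.indicator hs
  have hg0 : ∀ x, g x x = 0 := fun x => Set.indicator_of_notMem (fun hx => hsne hx rfl) _
  have hgs : ∀ F : X × X → ℝ≥0∞, ∫⁻ p in s, F p ∂(π μ).prod (π μ)
      = ∫⁻ p, F p * g p.1 p.2 ∂(π μ).prod (π μ) := fun F => by
    rw [← lintegral_indicator hs]
    congr 1 with p
    by_cases hp : p ∈ s <;> simp [g, hp]
  calc ∫⁻ p in s, f p.1 p.2 ∂(π μ).prod (π μ)
      = ∫⁻ p, f p.1 p.2 * g p.1 p.2 ∂(π μ).prod (π μ) := hgs _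
    _ = ∫⁻ p, f p.1 p.2 * g p.2 p.1 ∂(π μ).prod (π μ) := by
      rw [← lintegral_lintegral_add_dirac_eq_of_diag_eq_zero hf hA2' hμ hg hg0,
        ← lintegral_lintegral_add_dirac_eq_of_diag_eq_zero hf hA2' hμ (g := fun x y => g y x)
          (hg.comp measurable_swap) hg0]
      exact hC μ hμ g hg
    _ = ∫⁻ p, f p.2 p.1 * g p.1 p.2 ∂(π μ).prod (π μ) := (lintegral_prod_swap _).symm
    _ = ∫⁻ p in s, f p.2 p.1 ∂(π μ).prod (π μ) := (hgs _).symm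

theorem cocycle_of_ae_density_symm (hf : Measurable (Function.uncurry f)) (hA2' : CondA2' π f)
    (hσ : ∀ μ, SigmaFinite (π μ))
    (hsymm : ∀ μ, IsPointMeasure μ → ∀ᵐ p ∂(π μ).prod (π μ), f p.1 p.2 = f p.2 p.1) :
    Cocycle π := by
  intro μ hμ g hg
  have := hσ μ
  rw [lintegral_lintegral_add_dirac_eq hf hA2' hμ hg,
    lintegral_lintegral_add_dirac_eq hf hA2' hμ (g := fun x y => g y x) (hg.comp measurable_swap)]
  congr 1
  classical
  set N := diagonalAtoms (π μ)
  calc ∫⁻ p, Nᶜ.indicator (fun p => f p.1 p.2 * g p.1 p.2) p ∂(π μ).prod (π μ)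
      = ∫⁻ p, Nᶜ.indicator (fun p => f p.2 p.1 * g p.1 p.2) p ∂(π μ).prod (π μ) := by
        refine lintegral_congr_ae ?_
        filter_upwards [hsymm μ hμ] with p hp
        simp only [Set.indicator_apply, hp]
    _ = ∫⁻ p, Nᶜ.indicator (fun p => f p.2 p.1 * g p.1 p.2) p.swap ∂(π μ).prod (π μ) :=
      (lintegral_prod_swap _).symm
    _ = ∫⁻ p, Nᶜ.indicator (fun p => f p.1 p.2 * g p.2 p.1) p ∂(π μ).prod (π μ) := by
      simp only [N, Set.indicator_apply, Set.mem_compl_iff, swap_mem_diagonalAtoms, Prod.fst_swap,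
        Prod.snd_swap]

end Kernel

/-- under (A2'), the cocycle condition (A1) holds iff f is symmetric
π(μ,·)⊗π(μ,·)-a.s. off the diagonal. -/
theorem cocycle_iff_symm_density
    (π : Measure X → Measure X) (hπ : IsRadonKernel π)
    (f : X → X → ℝ≥0∞) (hf : Measurable (Function.uncurry f))
    (hA2' : CondA2' π f) :
    Cocycle π ↔
      ∀ μ : Measure X, IsPointMeasure μ →
        ∀ᵐ p : X × X ∂ ((π μ).prod (π μ)), p.1 ≠ p.2 → f p.1 p.2 = f p.2 p.1 := by
  have hσ : ∀ μ, SigmaFinite (π μ) := fun μ => sigmaFinite_of_isBounded_ne_top _ (hπ.2 μ)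
  refine ⟨fun hC μ hμ => (ae_density_symm_of_cocycle hf hA2' hσ hC hμ).mono fun _ hp _ => hp,
    fun hsymm => cocycle_of_ae_density_symm hf hA2' hσ fun μ hμ => ?_⟩
  filter_upwards [hsymm μ hμ] with p hp
  by_cases hdiag : p.1 = p.2
  · rw [hdiag]
  · exact hp hdiag
end

section
/- On the three-point space X = {−1, 0, 1}, the kernel π(μ,·) = ½[1−μ({−1})]δ_{−1} + ½δ_0 + ½[1+μ({1})]δ_1 satisfies Johnson's pointwise sufficiency postulate (J) — π(μ,{x}) depends only on x and μ({x}) — but fails the strong sufficiency postulate (J'): π(·, X) is not measurable with respect to σ(ζ_X), i.e. π(μ,X) is not a function of the total mass μ(X) alone. -/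
/-- The kernel on the three-point space X = {−1, 0, 1} (encoded as `Fin 3` with
0 ↦ −1, 1 ↦ 0, 2 ↦ 1): π(μ,·) = ½[1−μ({−1})]δ_{−1} + ½δ_0 + ½[1+μ({1})]δ_1,
given by its density with respect to counting measure. -/
noncomputable def counterKernel (μ : Fin 3 → ℕ) : Fin 3 → ℝ :=
  fun x =>
    if x = 0 then (1 - (μ 0 : ℝ)) / 2
    else if x = 1 then 1 / 2
    else (1 + (μ 2 : ℝ)) / 2

/-! The total mass π(μ, X) = (3 + μ{1} − μ{−1}) / 2 sees μ{1} and μ{−1} with opposite signs,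
so it separates δ_{−1} from δ_1 although both have total mass 1, while each single atom
π(μ, {x}) only reads μ{x}. -/

namespace counterKernel

@[simp] lemma apply_zero (μ : Fin 3 → ℕ) : counterKernel μ 0 = (1 - (μ 0 : ℝ)) / 2 := rfl

@[simp] lemma apply_one (μ : Fin 3 → ℕ) : counterKernel μ 1 = 1 / 2 := rfl

@[simp] lemma apply_two (μ : Fin 3 → ℕ) : counterKernel μ 2 = (1 + (μ 2 : ℝ)) / 2 := rfl

lemma apply_eq_of_apply_eq {μ₁ μ₂ : Fin 3 → ℕ} {x : Fin 3} (h : μ₁ x = μ₂ x) :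
    counterKernel μ₁ x = counterKernel μ₂ x := by
  fin_cases x <;> simp_all

lemma total_mass (μ : Fin 3 → ℕ) :
    counterKernel μ 0 + counterKernel μ 1 + counterKernel μ 2 = (3 + μ 2 - μ 0 : ℝ) / 2 := by
  simp only [apply_zero, apply_one, apply_two]
  ring

end counterKernel

/-- the kernel satisfies Johnson's pointwise postulate (J) — π(μ,{x})
depends only on x and μ({x}) — but not the strong postulate (J'): π(μ,X) is not a
function of the total mass μ(X) alone. -/
theorem counterexample_J_not_J' :
    (∀ (x : Fin 3) (μ₁ μ₂ : Fin 3 → ℕ), μ₁ x = μ₂ x →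
      counterKernel μ₁ x = counterKernel μ₂ x) ∧
    ¬ (∀ μ₁ μ₂ : Fin 3 → ℕ,
        μ₁ 0 + μ₁ 1 + μ₁ 2 = μ₂ 0 + μ₂ 1 + μ₂ 2 →
        counterKernel μ₁ 0 + counterKernel μ₁ 1 + counterKernel μ₁ 2
          = counterKernel μ₂ 0 + counterKernel μ₂ 1 + counterKernel μ₂ 2) := by
  refine ⟨fun _ _ _ => counterKernel.apply_eq_of_apply_eq, fun hJ' => ?_⟩
  have h := hJ' (Pi.single 0 1) (Pi.single 2 1) (by decide)
  rw [counterKernel.total_mass, counterKernel.total_mass] at h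
  norm_num [Pi.single_apply] at h
end

section
/- If a Radon kernel π satisfies (A1) and (A2') with density f, then the fundamental recursion holds: π(μ+δ_y, ·) = f(·,y)·π(μ,·) + [π(μ+δ_y,{y}) − f(y,y)π(μ,{y})]·δ_y as measures on X, for all μ ∈ M··(X) and y ∈ X. -/
open MeasureTheory ENNReal NNReal Bornology

variable {X : Type*} [MetricSpace X] [MeasurableSpace X] [BorelSpace X]

/-- Condition (A2): π(μ+δ_y, ·) = π(μ, ·) on {y}ᶜ. -/
def CondA2 (π : Measure X → Measure X) : Prop :=
  ∀ (y : X) (μ : Measure X), IsPointMeasure μ →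
    (π (μ + Measure.dirac y)).restrict {y}ᶜ = (π μ).restrict {y}ᶜ

namespace MeasureTheory

variable {α : Type*} [MeasurableSpace α] [MeasurableSingletonClass α]

theorem withDensity_apply_singleton (ν : Measure α) (g : α → ℝ≥0∞) (y : α) :
    ν.withDensity g {y} = g y * ν {y} := by
  rw [withDensity_apply _ (measurableSet_singleton y), lintegral_singleton]

namespace Measure

theorem restrict_compl_singleton_add_smul_dirac (ν : Measure α) (y : α) :
    ν.restrict {y}ᶜ + ν {y} • dirac y = ν := by
  rw [← restrict_singleton, add_comm, restrict_add_restrict_compl (measurableSet_singleton y)]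

/-- Stated additively because subtraction of measures truncates. -/
theorem add_smul_dirac_eq_of_restrict_compl_singleton_eq {ν ρ : Measure α} {y : α}
    (h : ν.restrict {y}ᶜ = ρ.restrict {y}ᶜ) :
    ν + ρ {y} • dirac y = ρ + ν {y} • dirac y := by
  conv_lhs => rw [← restrict_compl_singleton_add_smul_dirac ν y, h]
  conv_rhs => rw [← restrict_compl_singleton_add_smul_dirac ρ y]
  abel

end Measure

end MeasureTheory

theorem fundamental_recursion_with_density_general
    (π : Measure X → Measure X)
    (f : X → X → ℝ≥0∞)
    (hA2' : CondA2' π f) :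
    ∀ (μ : Measure X), IsPointMeasure μ → ∀ y : X,
      π (μ + Measure.dirac y) + (f y y * π μ {y}) • Measure.dirac y
        = (π μ).withDensity (fun x => f x y)
            + (π (μ + Measure.dirac y) {y}) • Measure.dirac y := by
  intro μ hμ y
  rw [← withDensity_apply_singleton (π μ) (fun x => f x y) y]
  exact Measure.add_smul_dirac_eq_of_restrict_compl_singleton_eq (hA2' y μ hμ)

/-- the fundamental recursion with interaction density f:
π(μ+δ_y,·) = f(·,y)·π(μ,·) + [π(μ+δ_y,{y}) − f(y,y)π(μ,{y})]·δ_y, written additively. -/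
theorem fundamental_recursion_with_density
    (π : Measure X → Measure X) (hπ : IsRadonKernel π)
    (f : X → X → ℝ≥0∞) (hf : Measurable (Function.uncurry f))
    (hA1 : Cocycle π) (hA2' : CondA2' π f) :
    ∀ (μ : Measure X), IsPointMeasure μ → ∀ y : X,
      π (μ + Measure.dirac y) + (f y y * π μ {y}) • Measure.dirac y
        = (π μ).withDensity (fun x => f x y)
            + (π (μ + Measure.dirac y) {y}) • Measure.dirac y :=
  fundamental_recursion_with_density_general π f hA2'
end
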